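/- arXiv:2006.13585 — 4 statements merged into one kernel-verified Lean document; each statement's English description precedes it below -/
import Mathlib

section
/- Let Ψ_t = [[1, (e^{−βT}/(2k))t],[0, e^{−βt}]], Θ = (0, η)ᵀ, and let Σ̄_0 be a symmetric 2×2 matrix with entries Σ̄_0^Q, Σ̄_0^{QV}, Σ̄_0^V. Then the (1,1) entry of Ψ_t Σ̄_0 Ψ_tᵀ + (1−ρ²) Ψ_t (∫_0^t Ψ_u^{−1}ΘΘᵀ(Ψ_u^{−1})ᵀ du) Ψ_tᵀ equals Σ̄_0^Q + (e^{−βT}/k) t Σ̄_0^{QV} + (e^{−2βT}/(4k²)) t² Σ̄_0^V + (1−ρ²)(η² e^{−2βT}/(16β³k²))(e^{2βt} − 1 − 2βt − 2β²t²). -/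
/-! With `c = e^{-βT}/(2k)`, the first entry of `Ψ_t Ψ_u⁻¹ Θ` is `η c (t - u) e^{βu}`, so the
noise contribution to the `(0,0)` entry is `η² c² ∫₀ᵗ (t - u)² e^{2βu} du`, an elementary integral,
while the `(0,0)` entry of `Ψ_t Σ̄₀ Ψ_tᵀ` is a quadratic polynomial in `c t`. -/

open Real Matrix intervalIntegral

lemma integral_sub_sq_mul_exp {a : ℝ} (ha : a ≠ 0) (t : ℝ) :
    ∫ u in (0 : ℝ)..t, (t - u) ^ 2 * exp (a * u)
      = (2 * exp (a * t) - 2 - 2 * a * t - a ^ 2 * t ^ 2) / a ^ 3 := by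
  have hderiv : ∀ u ∈ Set.uIcc (0 : ℝ) t, HasDerivAt
      (fun u => exp (a * u) * ((t - u) ^ 2 / a + 2 * (t - u) / a ^ 2 + 2 / a ^ 3))
      ((t - u) ^ 2 * exp (a * u)) u := by
    -- `(e^{au} g)' = e^{au} (a g + g')`, and this `g` solves `a g + g' = (t - u)²`
    intro u _
    have hexp : HasDerivAt (fun u => exp (a * u)) (exp (a * u) * a) u := by
      simpa using ((hasDerivAt_id u).const_mul a).exp
    have hsub : HasDerivAt (fun u => t - u) (-1) u := (hasDerivAt_id u).const_sub t
    have hpoly := (((hsub.fun_pow 2).div_const a).fun_add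
      ((hsub.const_mul 2).div_const (a ^ 2))).add_const (2 / a ^ 3)
    refine (hexp.fun_mul hpoly).congr_deriv ?_
    field_simp
    ring
  rw [integral_eq_sub_of_hasDerivAt hderiv (by apply Continuous.intervalIntegrable; fun_prop)]
  simp only [mul_zero, exp_zero, sub_zero, one_mul]
  field_simp
  ring

theorem Matrix.mul_of_intervalIntegral_mul {l m n p : Type*} [Fintype m] [Fintype n]
    (A : Matrix l m ℝ) (F : ℝ → Matrix m n ℝ) (B : Matrix n p ℝ) {a b : ℝ}
    (hF : ∀ i j, IntervalIntegrable (fun u => F u i j) MeasureTheory.volume a b) :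
    A * of (fun i j => ∫ u in a..b, F u i j) * B = of fun i j => ∫ u in a..b, (A * F u * B) i j := by
  ext i j
  have hterm : ∀ i₁ j₁, IntervalIntegrable (fun u => A i i₁ * F u i₁ j₁ * B j₁ j)
      MeasureTheory.volume a b := fun i₁ j₁ => ((hF i₁ j₁).const_mul _).mul_const _
  simp only [mul_apply, of_apply, Finset.sum_mul, ← integral_const_mul, ← integral_mul_const]
  rw [integral_finsetSum fun j₁ _ => by
    simpa only [Finset.sum_fn] using IntervalIntegrable.sum Finset.univ fun i₁ _ => hterm i₁ j₁]
  exact Finset.sum_congr rfl fun j₁ _ => (integral_finsetSum fun i₁ _ => hterm i₁ j₁).symm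

theorem Matrix.mul_mul_outer_mul_transpose_apply_self {R l m n : Type*} [CommSemiring R]
    [Fintype m] [Fintype n] (A : Matrix l m R) (B : Matrix m n R) (v : Matrix n (Fin 1) R)
    (i : l) : (A * (B * (v * vᵀ) * Bᵀ) * Aᵀ) i i = (A * B * v) i 0 ^ 2 := by
  have hfactor : A * (B * (v * vᵀ) * Bᵀ) * Aᵀ = (A * B * v) * (A * B * v)ᵀ := by
    simp only [transpose_mul, Matrix.mul_assoc]
  rw [hfactor, mul_apply, Fin.sum_univ_one, transpose_apply, sq]

theorem inventory_variance_general (k β η ρ T : ℝ) (hβ : β ≠ 0)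
    (SigQ SigQV SigV : ℝ) :
    let Sig0 : Matrix (Fin 2) (Fin 2) ℝ := !![SigQ, SigQV; SigQV, SigV]
    let Ψ : ℝ → Matrix (Fin 2) (Fin 2) ℝ := fun t =>
      !![1, (exp (-β * T) / (2 * k)) * t; 0, exp (-β * t)]
    let Ψinv : ℝ → Matrix (Fin 2) (Fin 2) ℝ := fun t =>
      !![1, -(exp (-β * (T - t)) / (2 * k)) * t; 0, exp (β * t)]
    let Θ : Matrix (Fin 2) (Fin 1) ℝ := !![0; η]
    ∀ t ∈ Set.Icc (0 : ℝ) T,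
      (Ψ t * Sig0 * (Ψ t)ᵀ
          + (1 - ρ ^ 2) •
            (Ψ t *
              (Matrix.of fun i j =>
                ∫ u in (0 : ℝ)..t, (Ψinv u * (Θ * Θᵀ) * (Ψinv u)ᵀ) i j) *
              (Ψ t)ᵀ)) 0 0
        = SigQ + (exp (-β * T) / k) * t * SigQV
            + (exp (-2 * β * T) / (4 * k ^ 2)) * t ^ 2 * SigV
            + (1 - ρ ^ 2) * (η ^ 2 * exp (-2 * β * T) / (16 * β ^ 3 * k ^ 2)) *
                (exp (2 * β * t) - 1 - 2 * β * t - 2 * β ^ 2 * t ^ 2) := by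
  intro Sig0 Ψ Ψinv Θ t _
  set c := exp (-β * T) / (2 * k) with hc
  have hΨinv_cont : Continuous Ψinv := by unfold Ψinv; fun_prop
  have hdrift : (Ψ t * Sig0 * (Ψ t)ᵀ) 0 0 = SigQ + 2 * c * t * SigQV + c ^ 2 * t ^ 2 * SigV := by
    simp only [Ψ, Sig0, hc, mul_apply, transpose_apply, Fin.sum_univ_two, of_apply, cons_val',
      cons_val_zero, cons_val_one, cons_val_fin_one]
    ring
  have htransition : ∀ u, (Ψ t * Ψinv u * Θ) 0 0 = η * c * ((t - u) * exp (β * u)) := by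
    intro u
    have hshift : exp (-β * (T - u)) = exp (-β * T) * exp (β * u) := by
      rw [← exp_add]; ring_nf
    simp only [Ψ, Ψinv, Θ, hc, mul_apply, Fin.sum_univ_two, of_apply, cons_val',
      cons_val_zero, cons_val_one, cons_val_fin_one]
    rw [hshift]
    ring
  have hintegrand : ∀ u, (Ψ t * (Ψinv u * (Θ * Θᵀ) * (Ψinv u)ᵀ) * (Ψ t)ᵀ) 0 0
      = (η * c) ^ 2 * ((t - u) ^ 2 * exp (2 * β * u)) := by
    intro u
    rw [mul_mul_outer_mul_transpose_apply_self, htransition,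
      show 2 * β * u = β * u + β * u by ring, exp_add]
    ring
  rw [Matrix.add_apply, Matrix.smul_apply, mul_of_intervalIntegral_mul _ _ _
      fun i j => ((continuous_apply_apply i j).comp (by fun_prop)).intervalIntegrable _ _,
    of_apply, integral_congr fun u _ => hintegrand u, integral_const_mul,
    integral_sub_sq_mul_exp (mul_ne_zero two_ne_zero hβ), hdrift, hc,
    show -2 * β * T = -β * T + -β * T by ring, exp_add, smul_eq_mul]
  ring

theorem inventory_variance (k β η ρ T : ℝ) (hk : 0 < k) (hβ : β ≠ 0)
    (hρ : ρ ∈ Set.Icc (-1 : ℝ) 1) (hT : 0 < T)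
    (SigQ SigQV SigV : ℝ) :
    let Sig0 : Matrix (Fin 2) (Fin 2) ℝ := !![SigQ, SigQV; SigQV, SigV]
    let Ψ : ℝ → Matrix (Fin 2) (Fin 2) ℝ := fun t =>
      !![1, (exp (-β * T) / (2 * k)) * t; 0, exp (-β * t)]
    let Ψinv : ℝ → Matrix (Fin 2) (Fin 2) ℝ := fun t =>
      !![1, -(exp (-β * (T - t)) / (2 * k)) * t; 0, exp (β * t)]
    let Θ : Matrix (Fin 2) (Fin 1) ℝ := !![0; η]
    ∀ t ∈ Set.Icc (0 : ℝ) T,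
      (Ψ t * Sig0 * (Ψ t)ᵀ
          + (1 - ρ ^ 2) •
            (Ψ t *
              (Matrix.of fun i j =>
                ∫ u in (0 : ℝ)..t, (Ψinv u * (Θ * Θᵀ) * (Ψinv u)ᵀ) i j) *
              (Ψ t)ᵀ)) 0 0
        = SigQ + (exp (-β * T) / k) * t * SigQV
            + (exp (-2 * β * T) / (4 * k ^ 2)) * t ^ 2 * SigV
            + (1 - ρ ^ 2) * (η ^ 2 * exp (-2 * β * T) / (16 * β ^ 3 * k ^ 2)) *
                (exp (2 * β * t) - 1 - 2 * β * t - 2 * β ^ 2 * t ^ 2) :=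
  inventory_variance_general k β η ρ T hβ SigQ SigQV SigV
end

section
/- With Ψ_t and Θ as above, the (1,2) entry of Ψ_t Σ̄_0 Ψ_tᵀ + (1−ρ²) Ψ_t (∫_0^t Ψ_u^{−1}ΘΘᵀ(Ψ_u^{−1})ᵀ du) Ψ_tᵀ equals e^{−βt} Σ̄_0^{QV} + (e^{−βT}/(2k)) t e^{−βt} Σ̄_0^V + (1−ρ²)(η² e^{−βT}/(4β²k))(sinh(βt) − βt e^{−βt}). -/
/-! Ψ_t is unit upper triangular, so the (1,2) entry of Ψ_t S Ψ_tᵀ is e^{-βt}(S₁₂ + a_t S₂₂) and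
only needs S₁₂ and S₂₂. For the integral term, Ψ_u⁻¹ΘΘᵀ(Ψ_u⁻¹)ᵀ = η² v vᵀ with v the second column
of Ψ_u⁻¹, and e^{-β(T-u)} e^{βu} = e^{-βT} e^{2βu}, so the two entries needed are integrals of
e^{2βu} and u e^{2βu}. -/

open Real Matrix

theorem upperTriangular_mul_mul_transpose_apply_zero_one {R : Type*} [CommRing R]
    (a d : R) (S : Matrix (Fin 2) (Fin 2) R) :
    (!![1, a; 0, d] * S * (!![1, a; 0, d])ᵀ) 0 1 = d * (S 0 1 + a * S 1 1) := by
  simp [Matrix.mul_apply, Fin.sum_univ_two, Matrix.vecMul, dotProduct]; ring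

theorem upperTriangular_mul_outer_mul_transpose {R : Type*} [CommRing R] (b e η : R) :
    !![1, b; 0, e] * (!![0; η] * (!![0; η])ᵀ) * (!![1, b; 0, e])ᵀ
      = η ^ 2 • !![b * b, b * e; e * b, e * e] := by
  ext i j
  fin_cases i <;> fin_cases j <;>
    simp [Matrix.mul_apply, Fin.sum_univ_two, Matrix.vecMul, dotProduct] <;> ring

theorem integral_exp_mul {b : ℝ} (hb : b ≠ 0) (t : ℝ) :
    ∫ u in (0 : ℝ)..t, exp (b * u) = (exp (b * t) - 1) / b := by
  rw [intervalIntegral.integral_comp_mul_left (fun x => exp x) hb, integral_exp, mul_zero, exp_zero,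
    smul_eq_mul, inv_mul_eq_div]

theorem integral_mul_exp_mul {b : ℝ} (hb : b ≠ 0) (t : ℝ) :
    ∫ u in (0 : ℝ)..t, u * exp (b * u) = (t / b - 1 / b ^ 2) * exp (b * t) + 1 / b ^ 2 := by
  have hderiv : ∀ u ∈ Set.uIcc 0 t,
      HasDerivAt (fun u => (u / b - 1 / b ^ 2) * exp (b * u)) (u * exp (b * u)) u := by
    intro u _
    have hexp : HasDerivAt (fun u => exp (b * u)) (exp (b * u) * b) u :=
      (hasDerivAt_const_mul b).exp
    refine (((hasDerivAt_id' u).div_const b).sub_const (1 / b ^ 2) |>.mul hexp).congr_deriv ?_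
    field_simp
    ring
  rw [intervalIntegral.integral_eq_sub_of_hasDerivAt hderiv
    (Continuous.intervalIntegrable (by fun_prop) 0 t)]
  simp

theorem inventory_signal_covariance_general (k β η ρ T : ℝ) (hβ : β ≠ 0)
    (SigQ SigQV SigV : ℝ) :
    let Sig0 : Matrix (Fin 2) (Fin 2) ℝ := !![SigQ, SigQV; SigQV, SigV]
    let Ψ : ℝ → Matrix (Fin 2) (Fin 2) ℝ := fun t =>
      !![1, (exp (-β * T) / (2 * k)) * t; 0, exp (-β * t)]
    let Ψinv : ℝ → Matrix (Fin 2) (Fin 2) ℝ := fun t =>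
      !![1, -(exp (-β * (T - t)) / (2 * k)) * t; 0, exp (β * t)]
    let Θ : Matrix (Fin 2) (Fin 1) ℝ := !![0; η]
    ∀ t ∈ Set.Icc (0 : ℝ) T,
      (Ψ t * Sig0 * (Ψ t)ᵀ
          + (1 - ρ ^ 2) •
            (Ψ t *
              (Matrix.of fun i j =>
                ∫ u in (0 : ℝ)..t, (Ψinv u * (Θ * Θᵀ) * (Ψinv u)ᵀ) i j) *
              (Ψ t)ᵀ)) 0 1
        = exp (-β * t) * SigQV
            + (exp (-β * T) / (2 * k)) * t * exp (-β * t) * SigV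
            + (1 - ρ ^ 2) * (η ^ 2 * exp (-β * T) / (4 * β ^ 2 * k)) *
                (Real.sinh (β * t) - β * t * exp (-β * t)) := by
  intro Sig0 Ψ Ψinv Θ t _
  simp only [Sig0, Ψ, Ψinv, Θ, upperTriangular_mul_outer_mul_transpose]
  rw [Matrix.add_apply, Matrix.smul_apply, upperTriangular_mul_mul_transpose_apply_zero_one,
    upperTriangular_mul_mul_transpose_apply_zero_one, of_apply, of_apply]
  simp only [cons_val', cons_val_one, cons_val_fin_one, empty_val', cons_val_zero,
    Matrix.smul_apply, of_apply, smul_eq_mul]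
  have hexp_sq (u : ℝ) : exp (β * u) * exp (β * u) = exp (2 * β * u) := by
    rw [← exp_add]; ring_nf
  have hexp_shift (u : ℝ) : exp (-β * (T - u)) * exp (β * u) = exp (-β * T) * exp (2 * β * u) := by
    rw [← exp_add, ← exp_add]; ring_nf
  have hI01 : ∫ u in (0 : ℝ)..t, η ^ 2 * (-(exp (-β * (T - u)) / (2 * k)) * u * exp (β * u))
      = -(η ^ 2 * exp (-β * T) / (2 * k)) * ∫ u in (0 : ℝ)..t, u * exp (2 * β * u) := by
    rw [← intervalIntegral.integral_const_mul]
    exact intervalIntegral.integral_congr fun u _ => by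
      linear_combination (-(η ^ 2 / (2 * k)) * u) * hexp_shift u
  have hI11 : ∫ u in (0 : ℝ)..t, η ^ 2 * (exp (β * u) * exp (β * u))
      = η ^ 2 * ∫ u in (0 : ℝ)..t, exp (2 * β * u) := by
    simp only [hexp_sq, intervalIntegral.integral_const_mul]
  have h2β : 2 * β ≠ 0 := mul_ne_zero two_ne_zero hβ
  rw [hI01, hI11, integral_mul_exp_mul h2β, integral_exp_mul h2β, sinh_eq, ← hexp_sq,
    show -β * t = -(β * t) by ring, Real.exp_neg]
  field_simp
  ring

theorem inventory_signal_covariance (k β η ρ T : ℝ) (hk : 0 < k) (hβ : β ≠ 0)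
    (hρ : ρ ∈ Set.Icc (-1 : ℝ) 1) (hT : 0 < T)
    (SigQ SigQV SigV : ℝ) :
    let Sig0 : Matrix (Fin 2) (Fin 2) ℝ := !![SigQ, SigQV; SigQV, SigV]
    let Ψ : ℝ → Matrix (Fin 2) (Fin 2) ℝ := fun t =>
      !![1, (exp (-β * T) / (2 * k)) * t; 0, exp (-β * t)]
    let Ψinv : ℝ → Matrix (Fin 2) (Fin 2) ℝ := fun t =>
      !![1, -(exp (-β * (T - t)) / (2 * k)) * t; 0, exp (β * t)]
    let Θ : Matrix (Fin 2) (Fin 1) ℝ := !![0; η]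
    ∀ t ∈ Set.Icc (0 : ℝ) T,
      (Ψ t * Sig0 * (Ψ t)ᵀ
          + (1 - ρ ^ 2) •
            (Ψ t *
              (Matrix.of fun i j =>
                ∫ u in (0 : ℝ)..t, (Ψinv u * (Θ * Θᵀ) * (Ψinv u)ᵀ) i j) *
              (Ψ t)ᵀ)) 0 1
        = exp (-β * t) * SigQV
            + (exp (-β * T) / (2 * k)) * t * exp (-β * t) * SigV
            + (1 - ρ ^ 2) * (η ^ 2 * exp (-β * T) / (4 * β ^ 2 * k)) *
                (Real.sinh (β * t) - β * t * exp (-β * t)) :=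
  inventory_signal_covariance_general k β η ρ T hβ SigQ SigQV SigV
end

section
/- With Φ_t as above, for 0 ≤ u ≤ t ≤ T the scalar ρηb·[1 0]·Φ_t·Φ_u^{−1}·[0 1]ᵀ equals (2ρηz(1 − e^{−(b/κ)(t−u)}))/((1+2z)e^{ω(T−u)} − 1), and hence the price variance E[(S_t − E[S_t])²] = ∫_0^t (ρηb[1 0]Φ_tΦ_u^{−1}[0 1]ᵀ + σ)² du equals ∫_0^t ((2ρηz(1 − e^{−(b/κ)(t−u)}))/((1+2z)e^{ω(T−u)} − 1) + σ)² du. -/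
/-!
Write `a = b / κ` and `D s = (1 + 2z) e^{ω s} - 1`. In the product `Φ_t Φ_u⁻¹` the factor `D T`
cancels, and the `(0, 1)` entry collapses to `2z (1 - e^{-a(t-u)}) / (b D (T - u))` because
`e^{-a t} e^{a u} = e^{-a(t-u)}`. Multiplying by `ρηb` gives the first claim; the second follows by
integrating it over `u ∈ [0, t]`. Everything hinges on `D T ≠ 0`, which holds because `z > 0` and
`ω > 0` make `D s ≥ 2z` for `s ≥ 0`.
-/

open Real Matrix

namespace PriceVariance

noncomputable def fundamentalMatrix (b κ z ω T t : ℝ) : Matrix (Fin 2) (Fin 2) ℝ :=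
  !![1, 2 * z * (1 - exp (-(b / κ) * t)) / (b * ((1 + 2 * z) * exp (ω * T) - 1));
     0, ((1 + 2 * z) * exp (ω * (T - t)) - 1) / ((1 + 2 * z) * exp (ω * T) - 1) *
          exp (-(b / κ) * t)]

noncomputable def fundamentalMatrixInv (b κ z ω T t : ℝ) : Matrix (Fin 2) (Fin 2) ℝ :=
  !![1, -2 * z * (1 - exp (-(b / κ) * t)) * exp ((b / κ) * t) /
         (b * ((1 + 2 * z) * exp (ω * (T - t)) - 1));
     0, ((1 + 2 * z) * exp (ω * T) - 1) / ((1 + 2 * z) * exp (ω * (T - t)) - 1) *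
          exp ((b / κ) * t)]

lemma denominator_pos {z ω s : ℝ} (hz : 0 < z) (hωs : 0 ≤ ω * s) :
    0 < (1 + 2 * z) * exp (ω * s) - 1 := by
  nlinarith [one_le_exp hωs]

lemma fundamentalMatrix_mul_inv_apply_zero_one (b κ z ω T t u : ℝ)
    (hD : (1 + 2 * z) * exp (ω * T) - 1 ≠ 0) :
    (fundamentalMatrix b κ z ω T t * fundamentalMatrixInv b κ z ω T u) 0 1 =
      2 * z * (1 - exp (-(b / κ) * (t - u))) / (b * ((1 + 2 * z) * exp (ω * (T - u)) - 1)) := by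
  have hsplit : exp (-(b / κ) * (t - u)) = exp (-(b / κ) * t) * exp (b / κ * u) := by
    rw [← exp_add]; ring_nf
  have hneg : exp (-(b / κ) * u) = (exp (b / κ * u))⁻¹ := by rw [neg_mul, exp_neg]
  simp only [fundamentalMatrix, fundamentalMatrixInv, mul_apply, Fin.sum_univ_two, of_apply,
    cons_val', cons_val_zero, cons_val_one, empty_val', cons_val_fin_one]
  rw [hsplit, hneg]
  have hx : exp (b / κ * u) ≠ 0 := (exp_pos _).ne'
  generalize exp (b / κ * u) = x at hx ⊢
  field_simp
  ring

lemma mul_fundamentalMatrix_mul_inv_apply_zero_one (b κ z ω T t u : ℝ)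
    (hD : (1 + 2 * z) * exp (ω * T) - 1 ≠ 0) :
    b * (fundamentalMatrix b κ z ω T t * fundamentalMatrixInv b κ z ω T u) 0 1 =
      2 * z * (1 - exp (-(b / κ) * (t - u))) / ((1 + 2 * z) * exp (ω * (T - u)) - 1) := by
  rw [fundamentalMatrix_mul_inv_apply_zero_one b κ z ω T t u hD]
  rcases eq_or_ne b 0 with rfl | hb
  · simp
  · rw [mul_div_assoc', mul_div_mul_left _ _ hb]

end PriceVariance

open PriceVariance

theorem price_variance_closed_form_general (k kbar b β γbar η ρ σ T : ℝ) (hk : 0 < k)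
    (hkbar : 0 ≤ kbar) (hγbar : 0 < γbar)
    (κ z ω : ℝ) (hκ : κ = 2 * k + kbar) (hz : z = (κ * β - b) / (2 * γbar))
    (hω : ω = (κ * β - b) / κ) (hκβ : κ * β > b) :
    let Φ : ℝ → Matrix (Fin 2) (Fin 2) ℝ := fun t =>
      !![1, 2 * z * (1 - exp (-(b / κ) * t)) / (b * ((1 + 2 * z) * exp (ω * T) - 1));
         0, ((1 + 2 * z) * exp (ω * (T - t)) - 1) / ((1 + 2 * z) * exp (ω * T) - 1) *
              exp (-(b / κ) * t)]
    let Φinv : ℝ → Matrix (Fin 2) (Fin 2) ℝ := fun t =>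
      !![1, -2 * z * (1 - exp (-(b / κ) * t)) * exp ((b / κ) * t) /
             (b * ((1 + 2 * z) * exp (ω * (T - t)) - 1));
         0, ((1 + 2 * z) * exp (ω * T) - 1) / ((1 + 2 * z) * exp (ω * (T - t)) - 1) *
              exp ((b / κ) * t)]
    (∀ t ∈ Set.Icc (0 : ℝ) T, ∀ u ∈ Set.Icc (0 : ℝ) t,
        ρ * η * b * ((Φ t * Φinv u) 0 1)
          = 2 * ρ * η * z * (1 - exp (-(b / κ) * (t - u))) /
              ((1 + 2 * z) * exp (ω * (T - u)) - 1)) ∧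
      ∀ t ∈ Set.Icc (0 : ℝ) T,
        (∫ u in (0 : ℝ)..t, (ρ * η * b * ((Φ t * Φinv u) 0 1) + σ) ^ 2)
          = ∫ u in (0 : ℝ)..t,
              (2 * ρ * η * z * (1 - exp (-(b / κ) * (t - u))) /
                  ((1 + 2 * z) * exp (ω * (T - u)) - 1) + σ) ^ 2 := by
  intro Φ Φinv
  have hκ_pos : 0 < κ := by rw [hκ]; linarith
  have hz_pos : 0 < z := by rw [hz]; exact div_pos (by linarith) (by linarith)
  have hω_pos : 0 < ω := by rw [hω]; exact div_pos (by linarith) hκ_pos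
  have entry : ∀ t ∈ Set.Icc (0 : ℝ) T, ∀ u ∈ Set.Icc (0 : ℝ) t,
      ρ * η * b * ((Φ t * Φinv u) 0 1)
        = 2 * ρ * η * z * (1 - exp (-(b / κ) * (t - u))) /
            ((1 + 2 * z) * exp (ω * (T - u)) - 1) := by
    intro t ht u _
    have hD : (1 + 2 * z) * exp (ω * T) - 1 ≠ 0 :=
      (denominator_pos hz_pos (mul_nonneg hω_pos.le (ht.1.trans ht.2))).ne'
    rw [show Φ t * Φinv u =
        fundamentalMatrix b κ z ω T t * fundamentalMatrixInv b κ z ω T u from rfl,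
      mul_assoc, mul_fundamentalMatrix_mul_inv_apply_zero_one b κ z ω T t u hD]
    ring
  refine ⟨entry, fun t ht => intervalIntegral.integral_congr fun u hu => ?_⟩
  rw [Set.uIcc_of_le ht.1] at hu
  simp only [entry t ht u hu]

theorem price_variance_closed_form (k kbar b β γbar η ρ σ T : ℝ) (hk : 0 < k)
    (hkbar : 0 ≤ kbar) (hb : b ≠ 0) (hβ : 0 < β) (hγbar : 0 < γbar) (hT : 0 < T)
    (κ z ω : ℝ) (hκ : κ = 2 * k + kbar) (hz : z = (κ * β - b) / (2 * γbar))
    (hω : ω = (κ * β - b) / κ) (hκβ : κ * β > b) :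
    let Φ : ℝ → Matrix (Fin 2) (Fin 2) ℝ := fun t =>
      !![1, 2 * z * (1 - exp (-(b / κ) * t)) / (b * ((1 + 2 * z) * exp (ω * T) - 1));
         0, ((1 + 2 * z) * exp (ω * (T - t)) - 1) / ((1 + 2 * z) * exp (ω * T) - 1) *
              exp (-(b / κ) * t)]
    let Φinv : ℝ → Matrix (Fin 2) (Fin 2) ℝ := fun t =>
      !![1, -2 * z * (1 - exp (-(b / κ) * t)) * exp ((b / κ) * t) /
             (b * ((1 + 2 * z) * exp (ω * (T - t)) - 1));
         0, ((1 + 2 * z) * exp (ω * T) - 1) / ((1 + 2 * z) * exp (ω * (T - t)) - 1) *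
              exp ((b / κ) * t)]
    (∀ t ∈ Set.Icc (0 : ℝ) T, ∀ u ∈ Set.Icc (0 : ℝ) t,
        ρ * η * b * ((Φ t * Φinv u) 0 1)
          = 2 * ρ * η * z * (1 - exp (-(b / κ) * (t - u))) /
              ((1 + 2 * z) * exp (ω * (T - u)) - 1)) ∧
      ∀ t ∈ Set.Icc (0 : ℝ) T,
        (∫ u in (0 : ℝ)..t, (ρ * η * b * ((Φ t * Φinv u) 0 1) + σ) ^ 2)
          = ∫ u in (0 : ℝ)..t,
              (2 * ρ * η * z * (1 - exp (-(b / κ) * (t - u))) /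
                  ((1 + 2 * z) * exp (ω * (T - u)) - 1) + σ) ^ 2 :=
  price_variance_closed_form_general k kbar b β γbar η ρ σ T hk hkbar hγbar κ z ω hκ hz hω hκβ
end

section
/- Suppose H(t,x,q,S,V) = x + qS + c_1(t) + c_2(t)q + c_3(t)V + c_4(t)q² + c_5(t)V² + c_6(t)qV, where c_1,…,c_6 are C¹ and satisfy the six ODEs c_1' + η²c_5 + (c_2−γc_3)²/(4k) = 0, c_2' + μ + (c_2−γc_3)(b+2c_4−γc_6)/(2k) = 0, c_3' − βc_3 + (c_2−γc_3)(c_6−2γc_5)/(2k) = 0, c_4' + (b+2c_4−γc_6)²/(4k) = 0, c_5' − 2βc_5 + (c_6−2γc_5)²/(4k) = 0, c_6' − βc_6 + (c_6−2γc_5)(b+2c_4−γc_6)/(2k) = 0. Then H satisfies ∂_t H + sup_{ν∈ℝ} [−(S+kν)ν ∂_x H + ν ∂_q H + (μ+bν)∂_S H − (βV+γν)∂_V H + ½σ²∂_{SS}H + ½η²∂_{VV}H + ρση∂_{SV}H] = 0, the supremum being attained at ν* = (c_2 − γc_3 + (b + 2c_4 − γc_6)q + (c_6 − 2γc_5)V)/(2k).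 -/
/-!
The Hamiltonian of the quadratic ansatz is the concave quadratic `a + p ν - k ν²` in the control,
so its supremum is attained at `ν* = p / (2k)` with value `a + p² / (4k)`. Both `a` and `p` are
polynomials in `(q, V)`, and the six ODEs say precisely that the coefficients of
`1, q, V, q², V², qV` in `∂ₜH + a + p² / (4k)` vanish.
-/

theorem isGreatest_range_concave_quadratic {k : ℝ} (hk : 0 < k) (a p : ℝ) :
    IsGreatest (Set.range fun ν => a + p * ν - k * ν ^ 2)
      (a + p * (p / (2 * k)) - k * (p / (2 * k)) ^ 2) := by
  refine ⟨⟨p / (2 * k), rfl⟩, ?_⟩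
  rintro _ ⟨ν, rfl⟩
  have gap : a + p * (p / (2 * k)) - k * (p / (2 * k)) ^ 2 - (a + p * ν - k * ν ^ 2)
      = k * (ν - p / (2 * k)) ^ 2 := by
    field_simp
    ring
  nlinarith [mul_nonneg hk.le (sq_nonneg (ν - p / (2 * k)))]

section QuadraticAnsatz

variable (c₁ c₂ c₃ c₄ c₅ c₆ : ℝ → ℝ)

def quadraticAnsatz (t x q S V : ℝ) : ℝ :=
  x + q * S + c₁ t + c₂ t * q + c₃ t * V + c₄ t * q ^ 2 + c₅ t * V ^ 2 + c₆ t * q * V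

variable (t x q S V : ℝ)

theorem deriv_quadraticAnsatz_x :
    deriv (fun x' => quadraticAnsatz c₁ c₂ c₃ c₄ c₅ c₆ t x' q S V) x = 1 := by
  simp (disch := fun_prop) [quadraticAnsatz]

theorem deriv_quadraticAnsatz_q :
    deriv (fun q' => quadraticAnsatz c₁ c₂ c₃ c₄ c₅ c₆ t x q' S V) q
      = S + c₂ t + 2 * c₄ t * q + c₆ t * V := by
  simp (disch := fun_prop) [quadraticAnsatz]
  ring

theorem deriv_quadraticAnsatz_S :
    deriv (fun S' => quadraticAnsatz c₁ c₂ c₃ c₄ c₅ c₆ t x q S' V) S = q := by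
  simp (disch := fun_prop) [quadraticAnsatz]

theorem deriv_quadraticAnsatz_V :
    deriv (fun V' => quadraticAnsatz c₁ c₂ c₃ c₄ c₅ c₆ t x q S V') V
      = c₃ t + 2 * c₅ t * V + c₆ t * q := by
  simp (disch := fun_prop) [quadraticAnsatz]
  ring

theorem deriv_deriv_quadraticAnsatz_SS :
    deriv (fun S' => deriv (fun S'' => quadraticAnsatz c₁ c₂ c₃ c₄ c₅ c₆ t x q S'' V) S') S
      = 0 := by
  simp only [deriv_quadraticAnsatz_S, deriv_const]

theorem deriv_deriv_quadraticAnsatz_VV :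
    deriv (fun V' => deriv (fun V'' => quadraticAnsatz c₁ c₂ c₃ c₄ c₅ c₆ t x q S V'') V') V
      = 2 * c₅ t := by
  simp only [deriv_quadraticAnsatz_V]
  simp (disch := fun_prop)

theorem deriv_deriv_quadraticAnsatz_SV :
    deriv (fun S' => deriv (fun V' => quadraticAnsatz c₁ c₂ c₃ c₄ c₅ c₆ t x q S' V') V) S
      = 0 := by
  simp only [deriv_quadraticAnsatz_V, deriv_const]

variable {c₁ c₂ c₃ c₄ c₅ c₆ t}

theorem hasDerivAt_quadraticAnsatz_t {d₁ d₂ d₃ d₄ d₅ d₆ : ℝ} (h₁ : HasDerivAt c₁ d₁ t)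
    (h₂ : HasDerivAt c₂ d₂ t) (h₃ : HasDerivAt c₃ d₃ t) (h₄ : HasDerivAt c₄ d₄ t)
    (h₅ : HasDerivAt c₅ d₅ t) (h₆ : HasDerivAt c₆ d₆ t) :
    HasDerivAt (fun s => quadraticAnsatz c₁ c₂ c₃ c₄ c₅ c₆ s x q S V)
      (d₁ + d₂ * q + d₃ * V + d₄ * q ^ 2 + d₅ * V ^ 2 + d₆ * q * V) t :=
  (((((h₁.const_add (x + q * S)).add (h₂.mul_const q)).add (h₃.mul_const V)).add
    (h₄.mul_const (q ^ 2))).add (h₅.mul_const (V ^ 2))).add ((h₆.mul_const q).mul_const V)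

end QuadraticAnsatz

theorem single_agent_hjb_verification_general
    (k b γ β μ σ η ρ T : ℝ) (hk : 0 < k)
    (c1 c2 c3 c4 c5 c6 : ℝ → ℝ)
    (hode1 : ∀ t ∈ Set.Icc (0 : ℝ) T,
      HasDerivAt c1 (-(η ^ 2 * c5 t + (c2 t - γ * c3 t) ^ 2 / (4 * k))) t)
    (hode2 : ∀ t ∈ Set.Icc (0 : ℝ) T,
      HasDerivAt c2 (-(μ + (c2 t - γ * c3 t) * (b + 2 * c4 t - γ * c6 t) / (2 * k))) t)
    (hode3 : ∀ t ∈ Set.Icc (0 : ℝ) T,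
      HasDerivAt c3 (β * c3 t - (c2 t - γ * c3 t) * (c6 t - 2 * γ * c5 t) / (2 * k)) t)
    (hode4 : ∀ t ∈ Set.Icc (0 : ℝ) T,
      HasDerivAt c4 (-((b + 2 * c4 t - γ * c6 t) ^ 2 / (4 * k))) t)
    (hode5 : ∀ t ∈ Set.Icc (0 : ℝ) T,
      HasDerivAt c5 (2 * β * c5 t - (c6 t - 2 * γ * c5 t) ^ 2 / (4 * k)) t)
    (hode6 : ∀ t ∈ Set.Icc (0 : ℝ) T,
      HasDerivAt c6 (β * c6 t - (c6 t - 2 * γ * c5 t) * (b + 2 * c4 t - γ * c6 t) / (2 * k)) t) :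
    let H : ℝ → ℝ → ℝ → ℝ → ℝ → ℝ := fun t x q S V =>
      x + q * S + c1 t + c2 t * q + c3 t * V + c4 t * q ^ 2 + c5 t * V ^ 2 + c6 t * q * V
    ∀ t ∈ Set.Icc (0 : ℝ) T, ∀ x q S V : ℝ,
      let F : ℝ → ℝ := fun ν =>
        -(S + k * ν) * ν * deriv (fun x' => H t x' q S V) x
          + ν * deriv (fun q' => H t x q' S V) q
          + (μ + b * ν) * deriv (fun S' => H t x q S' V) S
          - (β * V + γ * ν) * deriv (fun V' => H t x q S V') V
          + (1 / 2) * σ ^ 2 * deriv (fun S' => deriv (fun S'' => H t x q S'' V) S') S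
          + (1 / 2) * η ^ 2 * deriv (fun V' => deriv (fun V'' => H t x q S V'') V') V
          + ρ * σ * η * deriv (fun S' => deriv (fun V' => H t x q S' V') V) S
      let νstar : ℝ :=
        (c2 t - γ * c3 t + (b + 2 * c4 t - γ * c6 t) * q + (c6 t - 2 * γ * c5 t) * V) / (2 * k)
      IsGreatest (Set.range F) (F νstar) ∧
        deriv (fun s => H s x q S V) t + F νstar = 0 := by
  intro H t ht x q S V F νstar
  have hH : H = quadraticAnsatz c1 c2 c3 c4 c5 c6 := rfl
  have hF : F = fun ν => (μ * q - β * V * (c3 t + 2 * c5 t * V + c6 t * q) + η ^ 2 * c5 t)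
      + (c2 t - γ * c3 t + (b + 2 * c4 t - γ * c6 t) * q + (c6 t - 2 * γ * c5 t) * V) * ν
      - k * ν ^ 2 := by
    funext ν
    simp only [F, hH]
    rw [deriv_deriv_quadraticAnsatz_SS, deriv_deriv_quadraticAnsatz_VV,
      deriv_deriv_quadraticAnsatz_SV, deriv_quadraticAnsatz_x, deriv_quadraticAnsatz_q,
      deriv_quadraticAnsatz_S, deriv_quadraticAnsatz_V]
    ring
  have hHt := (hasDerivAt_quadraticAnsatz_t x q S V (hode1 t ht) (hode2 t ht) (hode3 t ht)
    (hode4 t ht) (hode5 t ht) (hode6 t ht)).deriv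
  refine ⟨hF ▸ isGreatest_range_concave_quadratic hk _ _, ?_⟩
  rw [hH, hHt, hF]
  simp only [νstar]
  field_simp
  ring

theorem single_agent_hjb_verification
    (k b γ β μ σ η ρ T : ℝ) (hk : 0 < k) (hT : 0 < T)
    (c1 c2 c3 c4 c5 c6 : ℝ → ℝ)
    (hode1 : ∀ t ∈ Set.Icc (0 : ℝ) T,
      HasDerivAt c1 (-(η ^ 2 * c5 t + (c2 t - γ * c3 t) ^ 2 / (4 * k))) t)
    (hode2 : ∀ t ∈ Set.Icc (0 : ℝ) T,
      HasDerivAt c2 (-(μ + (c2 t - γ * c3 t) * (b + 2 * c4 t - γ * c6 t) / (2 * k))) t)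
    (hode3 : ∀ t ∈ Set.Icc (0 : ℝ) T,
      HasDerivAt c3 (β * c3 t - (c2 t - γ * c3 t) * (c6 t - 2 * γ * c5 t) / (2 * k)) t)
    (hode4 : ∀ t ∈ Set.Icc (0 : ℝ) T,
      HasDerivAt c4 (-((b + 2 * c4 t - γ * c6 t) ^ 2 / (4 * k))) t)
    (hode5 : ∀ t ∈ Set.Icc (0 : ℝ) T,
      HasDerivAt c5 (2 * β * c5 t - (c6 t - 2 * γ * c5 t) ^ 2 / (4 * k)) t)
    (hode6 : ∀ t ∈ Set.Icc (0 : ℝ) T,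
      HasDerivAt c6 (β * c6 t - (c6 t - 2 * γ * c5 t) * (b + 2 * c4 t - γ * c6 t) / (2 * k)) t) :
    let H : ℝ → ℝ → ℝ → ℝ → ℝ → ℝ := fun t x q S V =>
      x + q * S + c1 t + c2 t * q + c3 t * V + c4 t * q ^ 2 + c5 t * V ^ 2 + c6 t * q * V
    ∀ t ∈ Set.Icc (0 : ℝ) T, ∀ x q S V : ℝ,
      let F : ℝ → ℝ := fun ν =>
        -(S + k * ν) * ν * deriv (fun x' => H t x' q S V) x
          + ν * deriv (fun q' => H t x q' S V) q
          + (μ + b * ν) * deriv (fun S' => H t x q S' V) S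
          - (β * V + γ * ν) * deriv (fun V' => H t x q S V') V
          + (1 / 2) * σ ^ 2 * deriv (fun S' => deriv (fun S'' => H t x q S'' V) S') S
          + (1 / 2) * η ^ 2 * deriv (fun V' => deriv (fun V'' => H t x q S V'') V') V
          + ρ * σ * η * deriv (fun S' => deriv (fun V' => H t x q S' V') V) S
      let νstar : ℝ :=
        (c2 t - γ * c3 t + (b + 2 * c4 t - γ * c6 t) * q + (c6 t - 2 * γ * c5 t) * V) / (2 * k)
      IsGreatest (Set.range F) (F νstar) ∧
        deriv (fun s => H s x q S V) t + F νstar = 0 :=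
  single_agent_hjb_verification_general k b γ β μ σ η ρ T hk c1 c2 c3 c4 c5 c6 hode1 hode2 hode3
    hode4 hode5 hode6
end
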